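/- Let $M$ be a real number, $G$ a finite abelian group, and $f$ a non-constant real-valued function on $G$. Let $E$ be a linear homogeneous equation in $k \ge 3$ variables with integer coefficients each coprime to $|G|$. If $k$ is odd and $\Lambda_E[\tilde{f}] \le -M^{k-2}\|\tilde{f}\|_2^2$, then $\max_{g \in G} \tilde{f}(g) \ge M$, and consequently $\max_{g \in G} f(g) \ge \mathbb{E} f + M$. -/

import Mathlib

open scoped BigOperators

/-- `𝔼 f`: the average of a real-valued function over a (finite) type. -/
noncomputable def expect {G : Type*} (f : G → ℝ) : ℝ :=
  (∑ᶠ g, f g) / Nat.card G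

/-- The balanced part `f̃ = f - 𝔼 f` of `f`. -/
noncomputable def balanced {G : Type*} (f : G → ℝ) : G → ℝ :=
  fun g => f g - expect f

/-- `Λ_E[f]` for the linear homogeneous equation `E : c 0 • x 0 + ⋯ + c (k-1) • x (k-1) = 0`:
the average of `f (x 0) ⋯ f (x (k-1))` over the solution set of `E`. -/
noncomputable def lam {G : Type*} [AddCommGroup G] {k : ℕ} (c : Fin k → ℤ) (f : G → ℝ) : ℝ :=
  (∑ᶠ x ∈ {x : Fin k → G | ∑ i, c i • x i = 0}, ∏ i, f (x i)) /
    Nat.card {x : Fin k → G // ∑ i, c i • x i = 0}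

/-- `f|V`: the coset-average of `f`, as a function on the quotient `M ⧸ V`. -/
noncomputable def quotFn {F M : Type*} [Field F] [AddCommGroup M] [Module F M]
    (V : Submodule F M) (f : M → ℝ) : (M ⧸ V) → ℝ :=
  fun x => (∑ᶠ g ∈ {g : M | (Submodule.Quotient.mk g : M ⧸ V) = x}, f g) / Nat.card V

/-- `‖f‖₂² = 𝔼(f²)`. -/
noncomputable def norm2sq {G : Type*} (f : G → ℝ) : ℝ :=
  expect (fun g => f g ^ 2)

/-! Let `h = f̃`, so `∑ h = 0`, and let `m = max h`, which is `≥ 0`. Expanding the indicator of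
the equation in additive characters, `|G| · ∑_{E(x) = 0} ∏ᵢ h(xᵢ) = ∑_ψ ∏ᵢ ĥ(ψ^{cᵢ})`. Since
`∑ h = 0`, every coefficient satisfies `|ĥ(ψ)| = |∑ (h - m) ψ| ≤ ∑ (m - h) = |G| m`. Bounding all
but two factors in this way and the remaining two by AM-GM and Parseval (`ψ ↦ ψ^c` permutes the
characters because `c` is coprime to `|G|`) gives `|Λ_E[h]| ≤ m^{k-2} ‖h‖₂²`. If `m < M`, then
`m^{k-2} < M^{k-2}` as `k ≥ 3`, contradicting `Λ_E[h] ≤ -M^{k-2} ‖h‖₂²` with `‖h‖₂² > 0`. -/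

open Finset Function

@[to_additive]
lemma zpow_bijective_of_isCoprime_card {H : Type*} [Group H] {c : ℤ}
    (hc : IsCoprime c (Nat.card H)) : Bijective fun g : H => g ^ c := by
  obtain ⟨u, v, huv⟩ := hc
  have hinv : ∀ g : H, g ^ (u * c) = g := fun g => by
    calc g ^ (u * c) = g ^ (u * c) * (g ^ (Nat.card H : ℤ)) ^ v := by
          rw [zpow_natCast, pow_card_eq_one', one_zpow, mul_one]
      _ = g := by rw [← zpow_mul, ← zpow_add, mul_comm _ v, huv, zpow_one]
  refine bijective_iff_has_inverse.2 ⟨fun g => g ^ u, fun g => ?_, fun g => ?_⟩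
  · simp only [← zpow_mul, mul_comm c u, hinv]
  · simp only [← zpow_mul, hinv]

lemma AddChar.map_sum_eq_prod {A M ι : Type*} [AddCommMonoid A] [CommMonoid M] (ψ : AddChar A M)
    (s : Finset ι) (a : ι → A) : ψ (∑ i ∈ s, a i) = ∏ i ∈ s, ψ (a i) := by
  classical
  induction s using Finset.induction_on with
  | empty => simp
  | insert _ _ hi ih => rw [sum_insert hi, prod_insert hi, AddChar.map_add_eq_mul, ih]

lemma prod_le_mul_mul_pow_card_sub_two {ι : Type*} [Fintype ι] [DecidableEq ι] {a : ι → ℝ}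
    (ha : ∀ l, 0 ≤ a l) {B : ℝ} (hB : ∀ l, a l ≤ B) {i j : ι} (hij : i ≠ j) :
    ∏ l, a l ≤ a i * a j * B ^ (Fintype.card ι - 2) := by
  have hj : j ∈ univ.erase i := mem_erase.2 ⟨hij.symm, mem_univ j⟩
  rw [← mul_prod_erase univ a (mem_univ i), ← mul_prod_erase _ a hj, ← mul_assoc]
  have hcard : #((univ.erase i).erase j) = Fintype.card ι - 2 := by
    rw [card_erase_of_mem hj, card_erase_of_mem (mem_univ i), card_univ, Nat.sub_sub]
  gcongr
  · exact mul_nonneg (ha i) (ha j)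
  · exact (prod_le_prod (fun l _ => ha l) fun l _ => hB l).trans_eq (by rw [prod_const, hcard])

section Sums

variable {G : Type*} [Fintype G]

lemma expect_eq_sum_div (f : G → ℝ) : expect f = (∑ g, f g) / Fintype.card G := by
  rw [_root_.expect, finsum_eq_sum_of_fintype, Nat.card_eq_fintype_card]

lemma sum_balanced [Nonempty G] (f : G → ℝ) : ∑ g, balanced f g = 0 := by
  have hN : (Fintype.card G : ℝ) ≠ 0 := Nat.cast_ne_zero.2 Fintype.card_ne_zero
  simp only [balanced, sum_sub_distrib, sum_const, card_univ, nsmul_eq_mul, expect_eq_sum_div]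
  field_simp
  ring

lemma norm2sq_pos_of_ne_zero {f : G → ℝ} {a : G} (ha : f a ≠ 0) : 0 < norm2sq f := by
  rw [norm2sq, expect_eq_sum_div]
  exact div_pos (sum_pos' (fun g _ => sq_nonneg (f g)) ⟨a, mem_univ a, by positivity⟩)
    (Nat.cast_pos.2 (Fintype.card_pos_iff.2 ⟨a⟩))

lemma nonneg_of_sum_eq_zero_of_le [Nonempty G] {h : G → ℝ} (hsum : ∑ g, h g = 0) {m : ℝ}
    (hm : ∀ g, h g ≤ m) : 0 ≤ m := by
  have : ∑ g, h g ≤ Fintype.card G * m := by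
    simpa using sum_le_sum fun g (_ : g ∈ univ) => hm g
  exact nonneg_of_mul_nonneg_right (hsum ▸ this) (Nat.cast_pos.2 Fintype.card_pos)

end Sums

section Fourier

variable {G : Type*} [AddCommGroup G] [Fintype G]

noncomputable def charSum (h : G → ℝ) (ψ : AddChar G ℂ) : ℂ := ∑ x, (h x : ℂ) * ψ x

lemma charSum_zpow (h : G → ℝ) (ψ : AddChar G ℂ) (c : ℤ) :
    charSum h (ψ ^ c) = ∑ x, (h x : ℂ) * ψ (c • x) := by
  simp only [charSum, AddChar.zpow_apply, AddChar.map_zsmul_eq_zpow]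

lemma card_mul_sum_solutions_eq_sum_prod_charSum [DecidableEq G] {ι : Type*} [Fintype ι]
    [DecidableEq ι] (c : ι → ℤ) (h : G → ℝ) :
    (Fintype.card G : ℂ) * ((∑ x ∈ univ.filter (fun x : ι → G => ∑ i, c i • x i = 0),
        ∏ i, h (x i) : ℝ) : ℂ) = ∑ ψ : AddChar G ℂ, ∏ i, charSum h (ψ ^ c i) := by
  have expand : ∀ ψ : AddChar G ℂ, ∏ i, charSum h (ψ ^ c i)
      = ∑ x : ι → G, (∏ i, (h (x i) : ℂ)) * ψ (∑ i, c i • x i) := fun ψ => by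
    simp only [charSum_zpow, Fintype.prod_sum, AddChar.map_sum_eq_prod, prod_mul_distrib]
  simp only [expand]
  rw [sum_comm, sum_filter]
  push_cast
  rw [mul_sum]
  refine sum_congr rfl fun x _ => ?_
  rw [← mul_sum, AddChar.sum_apply_eq_ite]
  split_ifs <;> push_cast <;> ring

lemma sum_sq_norm_charSum (h : G → ℝ) :
    ∑ ψ : AddChar G ℂ, ‖charSum h ψ‖ ^ 2 = Fintype.card G * ∑ x, h x ^ 2 := by
  classical
  have hsq : ∀ z : ℂ, (‖z‖ : ℂ) ^ 2 = z * star z := fun z => by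
    rw [Complex.star_def, Complex.mul_conj, Complex.normSq_eq_norm_sq]
    push_cast
    rfl
  have expand : ∀ ψ : AddChar G ℂ, charSum h ψ * star (charSum h ψ)
      = ∑ x, ∑ y, (h x * h y : ℂ) * ψ (x - y) := fun ψ => by
    simp only [charSum, star_sum, star_mul', Complex.star_def, Complex.conj_ofReal,
      sum_mul_sum, AddChar.map_sub_eq_div]
    refine sum_congr rfl fun x _ => sum_congr rfl fun y _ => ?_
    rw [← AddChar.inv_apply_eq_conj]
    ring
  apply Complex.ofReal_injective
  push_cast
  simp only [hsq, expand]
  rw [sum_comm, mul_sum]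
  refine sum_congr rfl fun x _ => ?_
  rw [sum_comm]
  simp only [← mul_sum, AddChar.sum_apply_eq_ite, sub_eq_zero, mul_ite, mul_zero, sum_ite_eq,
    mem_univ, if_true]
  ring

lemma sum_sq_norm_charSum_zpow (h : G → ℝ) {c : ℤ} (hc : IsCoprime c (Nat.card G)) :
    ∑ ψ : AddChar G ℂ, ‖charSum h (ψ ^ c)‖ ^ 2 = Fintype.card G * ∑ x, h x ^ 2 := by
  have hc' : IsCoprime c (Nat.card (AddChar G ℂ)) := by
    rwa [Nat.card_eq_fintype_card, AddChar.card_eq, ← Nat.card_eq_fintype_card]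
  rw [(zpow_bijective_of_isCoprime_card hc').sum_comp fun ψ => ‖charSum h ψ‖ ^ 2,
    sum_sq_norm_charSum]

lemma card_solutions_eq_pow [DecidableEq G] {ι : Type*} [Fintype ι] [DecidableEq ι] [Nonempty ι]
    (c : ι → ℤ) (hc : ∀ i, IsCoprime (c i) (Nat.card G)) :
    #(univ.filter fun x : ι → G => ∑ i, c i • x i = 0)
      = Fintype.card G ^ (Fintype.card ι - 1) := by
  have hchar : ∀ ψ : AddChar G ℂ, ∏ i, charSum (fun _ => 1) (ψ ^ c i)
      = if ψ = 0 then (Fintype.card G : ℂ) ^ Fintype.card ι else 0 := fun ψ => by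
    simp only [charSum_zpow, Complex.ofReal_one, one_mul,
      fun i => (zsmul_bijective_of_isCoprime_card (hc i)).sum_comp ψ, AddChar.sum_eq_ite]
    split_ifs
    · rw [prod_const, card_univ]
    · exact prod_eq_zero (mem_univ (Classical.arbitrary ι)) rfl
  have key := card_mul_sum_solutions_eq_sum_prod_charSum c (fun _ : G => (1 : ℝ))
  simp only [hchar, sum_ite_eq', mem_univ, if_true, prod_const_one, sum_const,
    nsmul_eq_mul, mul_one] at key
  have hN : 0 < Fintype.card G := Fintype.card_pos
  have hι : Fintype.card ι = Fintype.card ι - 1 + 1 := (Nat.sub_add_cancel Fintype.card_pos).symm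
  rw [hι, pow_succ'] at key
  exact Nat.eq_of_mul_eq_mul_left hN (by exact_mod_cast key)

lemma norm_charSum_le_of_sum_eq_zero {h : G → ℝ} (hsum : ∑ x, h x = 0) {m : ℝ}
    (hm : ∀ x, h x ≤ m) (ψ : AddChar G ℂ) : ‖charSum h ψ‖ ≤ Fintype.card G * m := by
  by_cases hψ : ψ = 0
  · have hzero : charSum h ψ = 0 := by
      simp only [charSum, hψ, AddChar.zero_apply, mul_one]
      exact_mod_cast hsum
    rw [hzero, norm_zero]
    exact mul_nonneg (Nat.cast_nonneg _) (nonneg_of_sum_eq_zero_of_le hsum hm)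
  have hshift : charSum h ψ = ∑ x, ((h x - m : ℝ) : ℂ) * ψ x := by
    simp only [charSum, Complex.ofReal_sub, sub_mul, sum_sub_distrib, ← mul_sum,
      AddChar.sum_eq_zero_iff_ne_zero.2 hψ, mul_zero, sub_zero]
  calc ‖charSum h ψ‖ ≤ ∑ x, ‖((h x - m : ℝ) : ℂ) * ψ x‖ := hshift ▸ norm_sum_le _ _
    _ = ∑ x, (m - h x) := sum_congr rfl fun x _ => by
        rw [norm_mul, AddChar.norm_apply, mul_one, Complex.norm_real, Real.norm_eq_abs,
          abs_of_nonpos (sub_nonpos.2 (hm x)), neg_sub]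
    _ = Fintype.card G * m := by simp [sum_sub_distrib, hsum]

lemma abs_sum_solutions_le [DecidableEq G] {ι : Type*} [Fintype ι] [DecidableEq ι]
    (c : ι → ℤ) (hc : ∀ i, IsCoprime (c i) (Nat.card G)) {h : G → ℝ} (hsum : ∑ x, h x = 0)
    {m : ℝ} (hm : ∀ x, h x ≤ m) {i j : ι} (hij : i ≠ j) :
    |∑ x ∈ univ.filter (fun x : ι → G => ∑ l, c l • x l = 0), ∏ l, h (x l)|
      ≤ (Fintype.card G * m) ^ (Fintype.card ι - 2) * ∑ x, h x ^ 2 := by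
  set N : ℝ := (Fintype.card G : ℝ)
  set T := ∑ x ∈ univ.filter (fun x : ι → G => ∑ l, c l • x l = 0), ∏ l, h (x l)
  set F : ι → AddChar G ℂ → ℝ := fun l ψ => ‖charSum h (ψ ^ c l)‖
  have hN : 0 < N := Nat.cast_pos.2 Fintype.card_pos
  have hpow : 0 ≤ (N * m) ^ (Fintype.card ι - 2) :=
    pow_nonneg (mul_nonneg hN.le (nonneg_of_sum_eq_zero_of_le hsum hm)) _
  have hprod : ∀ ψ, ∏ l, F l ψ ≤ F i ψ * F j ψ * (N * m) ^ (Fintype.card ι - 2) := fun ψ =>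
    prod_le_mul_mul_pow_card_sub_two (fun _ => norm_nonneg _)
      (fun l => norm_charSum_le_of_sum_eq_zero hsum hm _) hij
  have hmain : N * |T| ≤ N * ((N * m) ^ (Fintype.card ι - 2) * ∑ x, h x ^ 2) := by
    calc N * |T| = ‖∑ ψ : AddChar G ℂ, ∏ l, charSum h (ψ ^ c l)‖ := by
          rw [← card_mul_sum_solutions_eq_sum_prod_charSum, norm_mul, Complex.norm_natCast,
            Complex.norm_real, Real.norm_eq_abs]
      _ ≤ ∑ ψ, ∏ l, F l ψ := by
          simpa only [F, norm_prod] using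
            norm_sum_le univ fun ψ : AddChar G ℂ => ∏ l, charSum h (ψ ^ c l)
      _ ≤ ∑ ψ, (F i ψ ^ 2 + F j ψ ^ 2) / 2 * (N * m) ^ (Fintype.card ι - 2) := by
          refine sum_le_sum fun ψ _ => (hprod ψ).trans ?_
          gcongr
          linarith [two_mul_le_add_sq (F i ψ) (F j ψ)]
      _ = N * ((N * m) ^ (Fintype.card ι - 2) * ∑ x, h x ^ 2) := by
          rw [← sum_mul, ← sum_div, sum_add_distrib, sum_sq_norm_charSum_zpow h (hc i),
            sum_sq_norm_charSum_zpow h (hc j)]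
          ring
  exact le_of_mul_le_mul_left hmain hN

end Fourier

lemma lam_eq_sum_div {G : Type*} [AddCommGroup G] [Fintype G] [DecidableEq G] {k : ℕ} [NeZero k]
    (c : Fin k → ℤ) (hc : ∀ i, IsCoprime (c i) (Nat.card G)) (f : G → ℝ) :
    lam c f = (∑ x ∈ univ.filter (fun x : Fin k → G => ∑ i, c i • x i = 0), ∏ i, f (x i))
      / (Fintype.card G : ℝ) ^ (k - 1) := by
  rw [lam, Nat.card_eq_fintype_card, Fintype.card_subtype, card_solutions_eq_pow c hc,
    Fintype.card_fin, ← finsum_mem_coe_finset, coe_filter, Nat.cast_pow]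
  simp only [mem_univ, true_and]

lemma abs_lam_le_of_sum_eq_zero {G : Type*} [AddCommGroup G] [Fintype G] {k : ℕ} (hk : 2 ≤ k)
    (c : Fin k → ℤ) (hc : ∀ i, IsCoprime (c i) (Nat.card G)) {h : G → ℝ} (hsum : ∑ x, h x = 0)
    {m : ℝ} (hm : ∀ x, h x ≤ m) : |lam c h| ≤ m ^ (k - 2) * norm2sq h := by
  classical
  have : NeZero k := ⟨by omega⟩
  have hN : (0 : ℝ) < Fintype.card G := Nat.cast_pos.2 Fintype.card_pos
  have hsol := abs_sum_solutions_le c hc hsum hm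
    (i := ⟨0, by omega⟩) (j := ⟨1, by omega⟩) (by simp [Fin.ext_iff])
  rw [Fintype.card_fin, mul_pow] at hsol
  have hk' : k - 1 = k - 2 + 1 := by omega
  rw [lam_eq_sum_div c hc, abs_div, abs_of_pos (pow_pos hN _), div_le_iff₀ (pow_pos hN _),
    norm2sq, expect_eq_sum_div, hk', pow_succ]
  calc _ ≤ (Fintype.card G : ℝ) ^ (k - 2) * m ^ (k - 2) * ∑ x, h x ^ 2 := hsol
    _ = _ := by field_simp

theorem stmt_7_general (M : ℝ) {G : Type*} [AddCommGroup G] [Finite G]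
    (f : G → ℝ) (hf : ∃ a b : G, f a ≠ f b)
    {k : ℕ} (hk : 3 ≤ k) (c : Fin k → ℤ)
    (hc : ∀ i, IsCoprime (c i) (Nat.card G : ℤ))
    (hlam : lam c (balanced f) ≤ -M ^ (k - 2) * norm2sq (balanced f)) :
    (∃ g : G, balanced f g ≥ M) ∧ (∃ g : G, f g ≥ expect f + M) := by
  have := Fintype.ofFinite G
  obtain ⟨g₀, hg₀⟩ := Finite.exists_max (balanced f)
  have hsum := sum_balanced f
  have hm := nonneg_of_sum_eq_zero_of_le hsum hg₀
  have hpos : 0 < norm2sq (balanced f) := by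
    obtain ⟨a, b, hab⟩ := hf
    by_cases ha : balanced f a = 0
    · exact norm2sq_pos_of_ne_zero (a := b) fun hb => hab (by unfold balanced at ha hb; linarith)
    · exact norm2sq_pos_of_ne_zero ha
  have hM : M ≤ balanced f g₀ := by
    by_contra! hlt
    have hlam_ge := (neg_abs_le _).trans' <| neg_le_neg <|
      abs_lam_le_of_sum_eq_zero (by omega) c hc hsum hg₀
    have hle : M ^ (k - 2) ≤ balanced f g₀ ^ (k - 2) :=
      le_of_mul_le_mul_right (by linarith) hpos
    exact (pow_lt_pow_left₀ hlt hm (by omega)).not_ge hle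
  exact ⟨⟨g₀, hM⟩, ⟨g₀, by simp only [balanced] at hM; linarith⟩⟩

theorem stmt_7 (M : ℝ) {G : Type*} [AddCommGroup G] [Finite G]
    (f : G → ℝ) (hf : ∃ a b : G, f a ≠ f b)
    {k : ℕ} (hk : 3 ≤ k) (c : Fin k → ℤ)
    (hc : ∀ i, IsCoprime (c i) (Nat.card G : ℤ))
    (hodd : Odd k)
    (hlam : lam c (balanced f) ≤ -M ^ (k - 2) * norm2sq (balanced f)) :
    (∃ g : G, balanced f g ≥ M) ∧ (∃ g : G, f g ≥ expect f + M) :=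
  stmt_7_general M f hf hk c hc hlam
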